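/- For all p, p₁ ∈ ℝ³ the Moller velocity v_M = g·s^{1/2}/(p₀p₁₀) satisfies the bound v_M ≤ |p/p₀ − p₁/p₁₀|. -/

import Mathlib

noncomputable section
open Real
open scoped RealInnerProductSpace

/-- ℝ³ with the Euclidean norm. -/
abbrev E3 := EuclideanSpace ℝ (Fin 3)

namespace EnskogK

/-- the relativistic energy `p₀ = √(1+|p|²)` -/
def p0 (p : E3) : ℝ := Real.sqrt (1 + ‖p‖ ^ 2)

/-- the cross product on ℝ³ -/
def cross (u v : E3) : E3 :=
  (WithLp.equiv 2 (Fin 3 → ℝ)).symm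
    (crossProduct ((WithLp.equiv 2 (Fin 3 → ℝ)) u) ((WithLp.equiv 2 (Fin 3 → ℝ)) v))

/-- the relative momentum `g = (1/2)√(|p₁−p|² − (p₁₀−p₀)²)` -/
def gmom (p p₁ : E3) : ℝ :=
  (1 / 2) * Real.sqrt (‖p₁ - p‖ ^ 2 - (p0 p₁ - p0 p) ^ 2)

/-- `s = (p₀+p₁₀)² − |p+p₁|²` -/
def smom (p p₁ : E3) : ℝ := (p0 p + p0 p₁) ^ 2 - ‖p + p₁‖ ^ 2

end EnskogK

/-!
Since `s = 2(p₀p₁₀ - p·p₁ + 1)` and `4g² = s - 4`, squaring the claim and clearing the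
denominator `(p₀p₁₀)²` turns it into `(p₀p₁₀ - p·p₁)² - 1 ≤ |p₁₀ p - p₀ p₁|²`. Expanding with
`p₀² = 1 + |p|²`, the gap between the two sides is `|p|²|p₁|² - (p·p₁)² = |p × p₁|² ≥ 0`.
-/

section InnerProductSpace

variable {V : Type*} [NormedAddCommGroup V] [InnerProductSpace ℝ V]

theorem norm_inv_smul_sub_inv_smul_sq {x y : ℝ} (hx : x ≠ 0) (hy : y ≠ 0) (u v : V) :
    ‖x⁻¹ • u - y⁻¹ • v‖ ^ 2 = ‖y • u - x • v‖ ^ 2 / (x * y) ^ 2 := by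
  have h : x⁻¹ • u - y⁻¹ • v = (x * y)⁻¹ • (y • u - x • v) := by
    rw [smul_sub, smul_smul, smul_smul]
    congr 2 <;> field_simp
  rw [h, norm_smul, mul_pow, Real.norm_eq_abs, sq_abs, inv_pow, inv_mul_eq_div]

theorem sq_mul_sub_inner_sub_one_le_norm_smul_sub_smul_sq {E F : ℝ} {u v : V}
    (hE : E ^ 2 = 1 + ‖u‖ ^ 2) (hF : F ^ 2 = 1 + ‖v‖ ^ 2) :
    (E * F - ⟪u, v⟫) ^ 2 - 1 ≤ ‖F • u - E • v‖ ^ 2 := by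
  have hCS : ⟪u, v⟫ ^ 2 ≤ ‖u‖ ^ 2 * ‖v‖ ^ 2 := by
    simpa only [sq, real_inner_self_eq_norm_sq] using real_inner_mul_inner_self_le u v
  have hexp :
      ‖F • u - E • v‖ ^ 2 = F ^ 2 * ‖u‖ ^ 2 - 2 * (E * F * ⟪u, v⟫) + E ^ 2 * ‖v‖ ^ 2 := by
    rw [norm_sub_sq_real, real_inner_smul_left, real_inner_smul_right, norm_smul, norm_smul,
      mul_pow, mul_pow, Real.norm_eq_abs, Real.norm_eq_abs, sq_abs, sq_abs]
    ring
  rw [hexp]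
  linear_combination (F ^ 2 - ‖v‖ ^ 2) * hE + hF + hCS

end InnerProductSpace

namespace EnskogK

theorem p0_sq (p : E3) : p0 p ^ 2 = 1 + ‖p‖ ^ 2 :=
  Real.sq_sqrt (by positivity)

theorem p0_pos (p : E3) : 0 < p0 p :=
  Real.sqrt_pos.mpr (by positivity)

theorem inner_add_one_le_p0_mul_p0 (p p₁ : E3) : ⟪p, p₁⟫ + 1 ≤ p0 p * p0 p₁ := by
  have hCS : ⟪p, p₁⟫ ≤ ‖p‖ * ‖p₁‖ := real_inner_le_norm p p₁
  have hEF : (‖p‖ * ‖p₁‖ + 1) ^ 2 ≤ (p0 p * p0 p₁) ^ 2 := by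
    rw [mul_pow, p0_sq, p0_sq]
    nlinarith [sq_nonneg (‖p‖ - ‖p₁‖)]
  have hEF' : ‖p‖ * ‖p₁‖ + 1 ≤ p0 p * p0 p₁ :=
    (pow_le_pow_iff_left₀ (by positivity) (mul_pos (p0_pos p) (p0_pos p₁)).le two_ne_zero).mp hEF
  linarith

theorem smom_eq (p p₁ : E3) : smom p p₁ = 2 * (p0 p * p0 p₁ - ⟪p, p₁⟫ + 1) := by
  rw [smom, norm_add_sq_real]
  linear_combination p0_sq p + p0_sq p₁

theorem gmom_eq (p p₁ : E3) : gmom p p₁ = (1 / 2) * √(2 * (p0 p * p0 p₁ - ⟪p, p₁⟫ - 1)) := by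
  rw [gmom, norm_sub_sq_real, real_inner_comm]
  congr 2
  linear_combination -p0_sq p - p0_sq p₁

theorem gmom_mul_sqrt_smom_sq (p p₁ : E3) :
    (gmom p p₁ * √(smom p p₁)) ^ 2 = (p0 p * p0 p₁ - ⟪p, p₁⟫) ^ 2 - 1 := by
  have h := inner_add_one_le_p0_mul_p0 p p₁
  rw [gmom_eq, smom_eq, mul_pow, mul_pow, Real.sq_sqrt (by linarith), Real.sq_sqrt (by linarith)]
  ring

end EnskogK

open EnskogK

/-- The Moller velocity `v_M = g·s^{1/2}/(p₀p₁₀)` satisfies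
`v_M ≤ |p/p₀ − p₁/p₁₀|`. -/
theorem moller_velocity_le (p p₁ : E3) :
    gmom p p₁ * Real.sqrt (smom p p₁) / (p0 p * p0 p₁) ≤
      ‖(p0 p)⁻¹ • p - (p0 p₁)⁻¹ • p₁‖ := by
  have hE := p0_pos p
  have hF := p0_pos p₁
  have hL : 0 ≤ gmom p p₁ * Real.sqrt (smom p p₁) / (p0 p * p0 p₁) := by
    rw [gmom]; positivity
  refine (pow_le_pow_iff_left₀ hL (norm_nonneg _) two_ne_zero).mp ?_
  rw [div_pow, gmom_mul_sqrt_smom_sq, norm_inv_smul_sub_inv_smul_sq hE.ne' hF.ne']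
  gcongr
  exact sq_mul_sub_inner_sub_one_le_norm_smul_sub_smul_sq (p0_sq p) (p0_sq p₁)
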